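/- arXiv:math/0611758 — 3 statements merged into one kernel-verified Lean document; each statement's English description precedes it below -/
import Mathlib

section
/- If G is a primitive group of permutations of an infinite set Ω and Γ₁ = (Ω, (α₁,β₁)^G), Γ₂ = (Ω, (α₂,β₂)^G) are two non-diagonal locally finite orbital digraphs of G, then Γ₁ and Γ₂ are quasi-isometric via the identity map on Ω: there exists a constant a > 0 such that for all α, β ∈ Ω, (1/a)·d_{Γ₁}(α,β) ≤ d_{Γ₂}(α,β) ≤ a·d_{Γ₁}(α,β). -/
def IsEquivRel {Ω : Type*} (r : Ω → Ω → Prop) : Prop :=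
  (∀ u, r u u) ∧ (∀ u v, r u v → r v u) ∧ (∀ u v w, r u v → r v w → r u w)

def IsPrimitiveAction (G Ω : Type*) [Group G] [MulAction G Ω] : Prop :=
  MulAction.IsPretransitive G Ω ∧
  ∀ r : Ω → Ω → Prop, IsEquivRel r →
    (∀ (g : G) (u v : Ω), r u v → r (g • u) (g • v)) →
    (∀ u v : Ω, r u v → u = v) ∨ (∀ u v : Ω, r u v)

section Aux

variable {Ω G : Type*} [Group G] [MulAction G Ω]

/-- smul preserves adjacency in an orbital graph. -/
lemma orbital_adj_smul {α β : Ω} {Γ : SimpleGraph Ω}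
    (hΓ : ∀ u v : Ω, Γ.Adj u v ↔ (∃ g : G, (g • α = u ∧ g • β = v) ∨ (g • α = v ∧ g • β = u)))
    (g : G) {u v : Ω} (h : Γ.Adj u v) : Γ.Adj (g • u) (g • v) := by
  rw [hΓ] at h ⊢
  obtain ⟨h', hh⟩ := h
  refine ⟨g * h', ?_⟩
  rcases hh with ⟨h1, h2⟩ | ⟨h1, h2⟩
  · exact Or.inl ⟨by rw [mul_smul, h1], by rw [mul_smul, h2]⟩
  · exact Or.inr ⟨by rw [mul_smul, h1], by rw [mul_smul, h2]⟩

/-- The hom given by `g`. -/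
def smulHom {α β : Ω} {Γ : SimpleGraph Ω}
    (hΓ : ∀ u v : Ω, Γ.Adj u v ↔ (∃ g : G, (g • α = u ∧ g • β = v) ∨ (g • α = v ∧ g • β = u)))
    (g : G) : Γ →g Γ where
  toFun := (g • ·)
  map_rel' := fun h => orbital_adj_smul hΓ g h

@[simp] lemma smulHom_apply {α β : Ω} {Γ : SimpleGraph Ω}
    (hΓ : ∀ u v : Ω, Γ.Adj u v ↔ (∃ g : G, (g • α = u ∧ g • β = v) ∨ (g • α = v ∧ g • β = u)))
    (g : G) (u : Ω) : smulHom hΓ g u = g • u := rfl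

lemma orbital_connected (hprim : IsPrimitiveAction G Ω) {α β : Ω} (hne : α ≠ β)
    {Γ : SimpleGraph Ω}
    (hΓ : ∀ u v : Ω, Γ.Adj u v ↔ (∃ g : G, (g • α = u ∧ g • β = v) ∨ (g • α = v ∧ g • β = u))) :
    Γ.Connected := by
  have hr : IsEquivRel Γ.Reachable :=
    ⟨fun u => SimpleGraph.Reachable.refl u, fun u v h => h.symm, fun u v w h h' => h.trans h'⟩
  have hinv : ∀ (g : G) (u v : Ω), Γ.Reachable u v → Γ.Reachable (g • u) (g • v) :=
    fun g u v h => h.map (smulHom hΓ g)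
  rcases hprim.2 _ hr hinv with h | h
  · exfalso
    exact hne (h α β (SimpleGraph.Adj.reachable ((hΓ α β).2 ⟨1, Or.inl ⟨one_smul _ _, one_smul _ _⟩⟩)))
  · exact @SimpleGraph.Connected.mk _ _ (fun u v => h u v) ⟨α⟩

lemma orbital_dist_smul {α β : Ω} {Γ : SimpleGraph Ω}
    (hΓ : ∀ u v : Ω, Γ.Adj u v ↔ (∃ g : G, (g • α = u ∧ g • β = v) ∨ (g • α = v ∧ g • β = u)))
    (g : G) (u v : Ω) : Γ.dist (g • u) (g • v) = Γ.dist u v := by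
  have key : ∀ (g : G) (u v : Ω), Γ.dist (g • u) (g • v) ≤ Γ.dist u v := by
    intro g u v
    by_cases hz : Γ.dist u v = 0
    · rcases SimpleGraph.dist_eq_zero_iff_eq_or_not_reachable.mp hz with rfl | hnr
      · simp [SimpleGraph.dist_self]
      · have hnr' : ¬ Γ.Reachable (g • u) (g • v) := fun h =>
          hnr (by simpa [smulHom_apply, inv_smul_smul] using h.map (smulHom hΓ g⁻¹))
        simp [SimpleGraph.dist_eq_zero_of_not_reachable hnr']
    · obtain ⟨p, hp⟩ := SimpleGraph.exists_walk_of_dist_ne_zero hz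
      calc Γ.dist (g • u) (g • v) ≤ (p.map (smulHom hΓ g)).length := SimpleGraph.dist_le _
        _ = p.length := SimpleGraph.Walk.length_map _ _
        _ = Γ.dist u v := hp
  refine le_antisymm (key g u v) ?_
  have := key g⁻¹ (g • u) (g • v)
  simpa [inv_smul_smul] using this

lemma dist_le_of_edge_bound {Γ₁ Γ₂ : SimpleGraph Ω} (hconn₂ : Γ₂.Connected) {c : ℕ}
    (hedge : ∀ u v : Ω, Γ₁.Adj u v → Γ₂.dist u v ≤ c)
    {u v : Ω} (p : Γ₁.Walk u v) : Γ₂.dist u v ≤ c * p.length := by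
  induction p with
  | nil => simp [SimpleGraph.dist_self]
  | cons h p ih =>
    calc Γ₂.dist _ _ ≤ Γ₂.dist _ _ + Γ₂.dist _ _ := hconn₂.dist_triangle
      _ ≤ c + c * p.length := Nat.add_le_add (hedge _ _ h) ih
      _ = c * (p.length + 1) := by ring
      _ = c * (SimpleGraph.Walk.cons h p).length := by rw [SimpleGraph.Walk.length_cons]

end Aux

/-- If `G` is a primitive group of permutations of an infinite set `Ω`
and `Γ₁ = (Ω, (α₁,β₁)^G)`, `Γ₂ = (Ω, (α₂,β₂)^G)` are two non-diagonal locally finite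
orbital digraphs of `G`, then `Γ₁` and `Γ₂` are quasi-isometric via the identity map:
there is a constant `a > 0` with `(1/a)·d₁(α,β) ≤ d₂(α,β) ≤ a·d₁(α,β)` for all `α β`,
distances being taken in the underlying undirected graphs. -/
theorem orbital_digraphs_quasi_isometric
    {Ω : Type*} [Infinite Ω] {G : Type*} [Group G] [MulAction G Ω]
    (hprim : IsPrimitiveAction G Ω)
    (α₁ β₁ α₂ β₂ : Ω) (h₁ : α₁ ≠ β₁) (h₂ : α₂ ≠ β₂)
    (Γ₁ Γ₂ : SimpleGraph Ω)
    (hΓ₁ : ∀ u v : Ω, Γ₁.Adj u v ↔ (∃ g : G, (g • α₁ = u ∧ g • β₁ = v) ∨ (g • α₁ = v ∧ g • β₁ = u)))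
    (hΓ₂ : ∀ u v : Ω, Γ₂.Adj u v ↔ (∃ g : G, (g • α₂ = u ∧ g • β₂ = v) ∨ (g • α₂ = v ∧ g • β₂ = u)))
    (hlf₁ : ∀ v : Ω, {w : Ω | Γ₁.Adj v w}.Finite)
    (hlf₂ : ∀ v : Ω, {w : Ω | Γ₂.Adj v w}.Finite) :
    ∃ a : ℕ, 0 < a ∧ ∀ α β : Ω,
      Γ₁.dist α β ≤ a * Γ₂.dist α β ∧ Γ₂.dist α β ≤ a * Γ₁.dist α β := by
  have hconn₁ : Γ₁.Connected := orbital_connected hprim h₁ hΓ₁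
  have hconn₂ : Γ₂.Connected := orbital_connected hprim h₂ hΓ₂
  set c₁ : ℕ := Γ₂.dist α₁ β₁ with hc₁
  set c₂ : ℕ := Γ₁.dist α₂ β₂ with hc₂
  have hc₁pos : 0 < c₁ := hconn₂.pos_dist_of_ne h₁
  have hc₂pos : 0 < c₂ := hconn₁.pos_dist_of_ne h₂
  have hedge₁ : ∀ u v : Ω, Γ₁.Adj u v → Γ₂.dist u v ≤ c₁ := by
    intro u v h
    rw [hΓ₁] at h
    obtain ⟨g, ⟨ha, hb⟩ | ⟨ha, hb⟩⟩ := h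
    · rw [← ha, ← hb, orbital_dist_smul hΓ₂]
    · rw [← ha, ← hb, SimpleGraph.dist_comm, orbital_dist_smul hΓ₂]
  have hedge₂ : ∀ u v : Ω, Γ₂.Adj u v → Γ₁.dist u v ≤ c₂ := by
    intro u v h
    rw [hΓ₂] at h
    obtain ⟨g, ⟨ha, hb⟩ | ⟨ha, hb⟩⟩ := h
    · rw [← ha, ← hb, orbital_dist_smul hΓ₁]
    · rw [← ha, ← hb, SimpleGraph.dist_comm, orbital_dist_smul hΓ₁]
  refine ⟨max c₁ c₂, lt_of_lt_of_le hc₁pos (le_max_left _ _), fun α β => ?_⟩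
  obtain ⟨p₁, hp₁⟩ := hconn₁.exists_walk_length_eq_dist α β
  obtain ⟨p₂, hp₂⟩ := hconn₂.exists_walk_length_eq_dist α β
  constructor
  · calc Γ₁.dist α β ≤ c₂ * p₂.length := dist_le_of_edge_bound hconn₁ hedge₂ p₂
      _ = c₂ * Γ₂.dist α β := by rw [hp₂]
      _ ≤ max c₁ c₂ * Γ₂.dist α β := Nat.mul_le_mul_right _ (le_max_right _ _)
  · calc Γ₂.dist α β ≤ c₁ * p₁.length := dist_le_of_edge_bound hconn₂ hedge₁ p₁
      _ = c₁ * Γ₁.dist α β := by rw [hp₁]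
      _ ≤ max c₁ c₂ * Γ₁.dist α β := Nat.mul_le_mul_right _ (le_max_left _ _)
end

section
/- Let G act vertex-primitively and arc-transitively on a connectivity-one digraph Γ, and let Λ be a lobe of Γ with at least three vertices. Then the group of automorphisms of Λ induced by the setwise stabiliser G_{Λ} acts primitively on the vertex set of Λ. -/
/-!
Let `r` be a nontrivial `G_Λ`-invariant equivalence relation on `Λ`. The `G`-translates of `r`,
each living on a translate `gΛ`, generate a nontrivial `G`-invariant equivalence relation on `V`,
which is universal because `G` is primitive. Every vertex `z` has a unique gate into `Λ`, the first
vertex of `Λ` on a walk from `z`: two gates would be joined by a path meeting `Λ` only in its ends,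
and adding it to `Λ` keeps it 2-connected, against maximality. The gate map fixes `Λ` pointwise and
collapses every other lobe, in particular every translate `gΛ ≠ Λ`, to one vertex, so it carries the
generated relation back into `r`, which is therefore universal.

Transitivity follows by applying this to the `G_Λ`-orbit relation: by arc-transitivity every vertex
of `Λ` is in the orbit of one end of a fixed arc of `Λ`, so among three vertices two share an orbit.
-/

open Pointwise

section DigraphBasics

variable {V : Type*}

/-- Adjacency in a digraph given by its arc relation. -/
def DigraphAdj (A : V → V → Prop) (u v : V) : Prop := A u v ∨ A v u

/-- The subdigraph induced on the set `S` is connected. -/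
def ConnOn (A : V → V → Prop) (S : Set V) : Prop :=
  ∀ u ∈ S, ∀ v ∈ S,
    Relation.ReflTransGen (fun x y => DigraphAdj A x y ∧ x ∈ S ∧ y ∈ S) u v

/-- A vertex whose removal disconnects the digraph. -/
def IsCutVertex (A : V → V → Prop) (v : V) : Prop := ¬ ConnOn A {v}ᶜ

/-- A digraph has connectivity one if it is connected and the removal of some
single vertex disconnects it. -/
def ConnectivityOne (A : V → V → Prop) : Prop :=
  ConnOn A Set.univ ∧ ∃ v : V, IsCutVertex A v

/-- The set `S` induces a subdigraph of connectivity strictly greater than one: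
it is connected, has at least two vertices, and no single vertex disconnects it. -/
def TwoConnOn (A : V → V → Prop) (S : Set V) : Prop :=
  S.Nontrivial ∧ ConnOn A S ∧ ∀ w ∈ S, ConnOn A (S \ {w})

/-- A lobe of a digraph: a maximal set of vertices inducing a connected subdigraph
of connectivity strictly greater than one. -/
def IsLobe (A : V → V → Prop) (Λ : Set V) : Prop :=
  TwoConnOn A Λ ∧ ∀ Λ' : Set V, TwoConnOn A Λ' → Λ ⊆ Λ' → Λ' = Λ

/-- `r` restricts to an equivalence relation on `S`. -/
def IsEquivRelOn (S : Set V) (r : V → V → Prop) : Prop :=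
  (∀ u ∈ S, r u u) ∧ (∀ u ∈ S, ∀ v ∈ S, r u v → r v u) ∧
  (∀ u ∈ S, ∀ v ∈ S, ∀ w ∈ S, r u v → r v w → r u w)

/-- The subgroup `H` acts transitively on the set `S`. -/
def TransitiveOn {G : Type*} [Group G] [MulAction G V] (H : Subgroup G) (S : Set V) : Prop :=
  ∀ u ∈ S, ∀ v ∈ S, ∃ h ∈ H, h • u = v

/-- The subgroup `H` acts primitively on the set `S`: transitively, and every
`H`-invariant equivalence relation on `S` is trivial or universal. -/
def PrimitiveOn {G : Type*} [Group G] [MulAction G V] (H : Subgroup G) (S : Set V) : Prop :=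
  TransitiveOn H S ∧
  ∀ r : V → V → Prop, IsEquivRelOn S r →
    (∀ h ∈ H, ∀ u ∈ S, ∀ v ∈ S, r u v → r (h • u) (h • v)) →
    (∀ u ∈ S, ∀ v ∈ S, r u v → u = v) ∨ (∀ u ∈ S, ∀ v ∈ S, r u v)

/-- The subgroup `H` acts regularly on the set `S`: transitively, with
point stabilisers acting trivially on `S`. -/
def RegularOn {G : Type*} [Group G] [MulAction G V] (H : Subgroup G) (S : Set V) : Prop :=
  TransitiveOn H S ∧ ∀ h ∈ H, ∀ v ∈ S, h • v = v → ∀ w ∈ S, h • w = w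

end DigraphBasics

open Relation SimpleGraph

section Connectivity

variable {V : Type*} {A : V → V → Prop}

/-- `ConnOn A S` unfolds to connectivity for this relation. -/
def InducedAdj (A : V → V → Prop) (S : Set V) (x y : V) : Prop :=
  DigraphAdj A x y ∧ x ∈ S ∧ y ∈ S

theorem DigraphAdj.symm {x y : V} (h : DigraphAdj A x y) : DigraphAdj A y x :=
  Or.symm h

instance (S : Set V) : Std.Symm (InducedAdj A S) :=
  ⟨fun _ _ ⟨h, hx, hy⟩ => ⟨h.symm, hy, hx⟩⟩

theorem reflTransGen_inducedAdj_mono {S T : Set V} (hST : S ⊆ T) {u v : V}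
    (h : ReflTransGen (InducedAdj A S) u v) : ReflTransGen (InducedAdj A T) u v :=
  ReflTransGen.mono (fun _ _ ⟨h, hx, hy⟩ => ⟨h, hST hx, hST hy⟩) _ _ h

theorem connOn_of_forall_reflTransGen {S : Set V} (c : V)
    (h : ∀ u ∈ S, ReflTransGen (InducedAdj A S) u c) : ConnOn A S :=
  fun u hu v hv => (h u hu).trans (symm (h v hv))

theorem ConnOn.union {S T : Set V} {p : V} (hS : ConnOn A S) (hT : ConnOn A T)
    (hpS : p ∈ S) (hpT : p ∈ T) : ConnOn A (S ∪ T) := by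
  refine connOn_of_forall_reflTransGen p ?_
  rintro u (hu | hu)
  · exact reflTransGen_inducedAdj_mono Set.subset_union_left (hS u hu p hpS)
  · exact reflTransGen_inducedAdj_mono Set.subset_union_right (hT u hu p hpT)

theorem TwoConnOn.connOn_diff_singleton {S : Set V} (hS : TwoConnOn A S) (w : V) :
    ConnOn A (S \ {w}) := by
  by_cases hw : w ∈ S
  · exact hS.2.2 w hw
  · rw [Set.sdiff_singleton_eq_self hw]
    exact hS.2.1

theorem TwoConnOn.union {S T : Set V} {x y : V} (hS : TwoConnOn A S) (hT : TwoConnOn A T)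
    (hxS : x ∈ S) (hxT : x ∈ T) (hyS : y ∈ S) (hyT : y ∈ T) (hxy : x ≠ y) :
    TwoConnOn A (S ∪ T) := by
  refine ⟨hS.1.mono Set.subset_union_left, hS.2.1.union hT.2.1 hxS hxT, fun w _ => ?_⟩
  rw [Set.union_sdiff_distrib]
  rcases eq_or_ne x w with rfl | hxw
  · exact (hS.connOn_diff_singleton x).union (hT.connOn_diff_singleton x)
      ⟨hyS, hxy.symm⟩ ⟨hyT, hxy.symm⟩
  · exact (hS.connOn_diff_singleton w).union (hT.connOn_diff_singleton w) ⟨hxS, hxw⟩ ⟨hxT, hxw⟩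

theorem IsLobe.eq_of_mem_of_mem {L₁ L₂ : Set V} {x y : V} (h₁ : IsLobe A L₁) (h₂ : IsLobe A L₂)
    (hx₁ : x ∈ L₁) (hx₂ : x ∈ L₂) (hy₁ : y ∈ L₁) (hy₂ : y ∈ L₂) (hxy : x ≠ y) : L₁ = L₂ := by
  have hu := h₁.1.union h₂.1 hx₁ hx₂ hy₁ hy₂ hxy
  rw [← h₁.2 _ hu Set.subset_union_left, h₂.2 _ hu Set.subset_union_right]

end Connectivity

section Walks

variable {V : Type*} {A : V → V → Prop}

theorem reflTransGen_of_walk {S : Set V} {u v : V} (w : (fromRel A).Walk u v)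
    (hw : ∀ x ∈ w.support, x ∈ S) : ReflTransGen (InducedAdj A S) u v := by
  induction w with
  | nil => exact .refl
  | @cons a b c h p ih =>
    refine .head ⟨((fromRel_adj _ _ _).mp h).2, hw a (by simp), hw b (by simp)⟩ (ih ?_)
    exact fun x hx => hw x (by simp [hx])

theorem exists_walk_of_reflTransGen {S : Set V} {u v : V} (hu : u ∈ S)
    (h : ReflTransGen (InducedAdj A S) u v) :
    ∃ w : (fromRel A).Walk u v, ∀ x ∈ w.support, x ∈ S := by
  induction h with
  | refl => exact ⟨.nil, by simpa using hu⟩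
  | @tail b c _ hbc ih =>
    obtain ⟨w, hw⟩ := ih
    rcases eq_or_ne b c with rfl | hne
    · exact ⟨w, hw⟩
    · refine ⟨w.concat ((fromRel_adj _ _ _).mpr ⟨hne, hbc.1⟩), fun x hx => ?_⟩
      rw [Walk.support_concat, List.mem_append, List.mem_singleton] at hx
      rcases hx with hx | rfl
      · exact hw x hx
      · exact hbc.2.2

theorem ConnOn.exists_adj {S : Set V} (hS : ConnOn A S) (hnt : S.Nontrivial) {u : V}
    (hu : u ∈ S) : ∃ v ∈ S, v ≠ u ∧ DigraphAdj A u v := by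
  obtain ⟨t, ht, htu⟩ := hnt.exists_ne u
  obtain ⟨w, hw⟩ := exists_walk_of_reflTransGen hu (hS u hu t ht)
  have hnil : ¬w.Nil := Walk.not_nil_of_ne htu.symm
  obtain ⟨hne, hadj⟩ := (fromRel_adj _ _ _).mp (w.adj_snd hnil)
  exact ⟨w.snd, hw _ (w.getVert_mem_support 1), hne.symm, hadj⟩

theorem connOn_support {u v : V} (w : (fromRel A).Walk u v) :
    ConnOn A {x | x ∈ w.support} := by
  classical
  exact connOn_of_forall_reflTransGen v fun x hx =>
    reflTransGen_of_walk (w.dropUntil x hx) fun _ hy => w.support_dropUntil_subset_support hx hy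

/-- Of the parts of the path before and after `u`, at least one avoids `w`. -/
theorem SimpleGraph.Walk.IsPath.exists_end_reflTransGen_diff_singleton {a b u w : V}
    {q : (fromRel A).Walk a b} (hq : q.IsPath) (hu : u ∈ q.support) (huw : u ≠ w) :
    ∃ e, (e = a ∨ e = b) ∧ e ≠ w ∧
      ReflTransGen (InducedAdj A ({x | x ∈ q.support} \ {w})) u e := by
  classical
  by_cases hw : w ∈ (q.takeUntil u hu).support
  · have hnd : ((q.takeUntil u hu).support ++ (q.dropUntil u hu).support.tail).Nodup := by
      rw [← Walk.support_append, Walk.take_spec]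
      exact hq.support_nodup
    have hwd : w ∉ (q.dropUntil u hu).support := by
      rw [← Walk.cons_tail_support, List.mem_cons, not_or]
      exact ⟨huw.symm, fun h => List.disjoint_of_nodup_append hnd hw h⟩
    refine ⟨b, Or.inr rfl, fun h => hwd (h ▸ Walk.end_mem_support _),
      reflTransGen_of_walk (q.dropUntil u hu) ?_⟩
    exact fun x hx => ⟨q.support_dropUntil_subset_support hu hx, fun h => hwd (h ▸ hx)⟩
  · refine ⟨a, Or.inl rfl, fun h => hw (h ▸ Walk.start_mem_support _),
      reflTransGen_of_walk (q.takeUntil u hu).reverse ?_⟩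
    intro x hx
    rw [Walk.support_reverse, List.mem_reverse] at hx
    exact ⟨q.support_takeUntil_subset_support hu hx, fun h => hw (h ▸ hx)⟩

theorem TwoConnOn.union_support {S : Set V} {a b : V} (hS : TwoConnOn A S) (ha : a ∈ S)
    (hb : b ∈ S) {q : (fromRel A).Walk a b} (hq : q.IsPath) :
    TwoConnOn A (S ∪ {x | x ∈ q.support}) := by
  refine ⟨hS.1.mono Set.subset_union_left,
    hS.2.1.union (connOn_support q) ha q.start_mem_support, fun w _ => ?_⟩
  obtain ⟨c, hc, hcw⟩ := hS.1.exists_ne w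
  have hSw := hS.connOn_diff_singleton w
  have hsub : S \ {w} ⊆ (S ∪ {x | x ∈ q.support}) \ {w} :=
    Set.sdiff_subset_sdiff_left Set.subset_union_left
  refine connOn_of_forall_reflTransGen c fun u ⟨hu, huw⟩ => ?_
  rcases hu with hu | hu
  · exact reflTransGen_inducedAdj_mono hsub (hSw u ⟨hu, huw⟩ c ⟨hc, hcw⟩)
  · obtain ⟨e, hab, hew, hue⟩ := hq.exists_end_reflTransGen_diff_singleton hu huw
    have he : e ∈ S := by rcases hab with rfl | rfl <;> assumption
    exact (reflTransGen_inducedAdj_mono (Set.sdiff_subset_sdiff_left Set.subset_union_right)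
      hue).trans (reflTransGen_inducedAdj_mono hsub (hSw e ⟨he, hew⟩ c ⟨hc, hcw⟩))

theorem IsLobe.mem_of_mem_support_of_isPath {Λ : Set V} {a b x : V} (hΛ : IsLobe A Λ)
    (ha : a ∈ Λ) (hb : b ∈ Λ) {q : (fromRel A).Walk a b} (hq : q.IsPath) (hx : x ∈ q.support) :
    x ∈ Λ :=
  hΛ.2 _ (hΛ.1.union_support ha hb hq) Set.subset_union_left ▸ Or.inr hx

theorem TwoConnOn.exists_arc {S : Set V} (hS : TwoConnOn A S) :
    ∃ x ∈ S, ∃ y ∈ S, x ≠ y ∧ A x y := by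
  obtain ⟨u, hu, -⟩ := hS.1
  obtain ⟨v, hv, hvu, huv | hvu'⟩ := ConnOn.exists_adj hS.2.1 hS.1 hu
  · exact ⟨u, hu, v, hv, hvu.symm, huv⟩
  · exact ⟨v, hv, u, hu, hvu, hvu'⟩

end Walks

section Gates

variable {V : Type*} {A : V → V → Prop} {Λ : Set V}

def IsGate (A : V → V → Prop) (Λ : Set V) (z a : V) : Prop :=
  a ∈ Λ ∧ ∃ w : (fromRel A).Walk z a, ∀ x ∈ w.support, x ∈ Λ → x = a

theorem isGate_self {z : V} (hz : z ∈ Λ) : IsGate A Λ z z :=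
  ⟨hz, .nil, by simp⟩

theorem exists_isGate_of_walk {z c : V} (w : (fromRel A).Walk z c) (hc : c ∈ Λ) :
    ∃ a, IsGate A Λ z a := by
  induction w with
  | nil => exact ⟨_, isGate_self hc⟩
  | @cons z _ _ h _ ih =>
    by_cases hz : z ∈ Λ
    · exact ⟨z, isGate_self hz⟩
    · obtain ⟨a, ha, w', hw'⟩ := ih hc
      refine ⟨a, ha, .cons h w', fun x hx hxΛ => ?_⟩
      rw [Walk.support_cons, List.mem_cons] at hx
      rcases hx with rfl | hx
      · exact absurd hxΛ hz
      · exact hw' x hx hxΛ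

theorem exists_isGate (hconn : ConnOn A Set.univ) (hΛ : Λ.Nonempty) (z : V) :
    ∃ a, IsGate A Λ z a := by
  obtain ⟨c, hc⟩ := hΛ
  obtain ⟨w, -⟩ := exists_walk_of_reflTransGen (Set.mem_univ z) (hconn z trivial c trivial)
  exact exists_isGate_of_walk w hc

/-- Two gates of `z` would be joined through `z` outside `Λ`; a shortest such connection is a path,
which maximality of the lobe forces into `Λ`, so it is a single edge between the gates, and that
edge would already lie on one of the two walks. -/
theorem IsLobe.isGate_unique (hΛ : IsLobe A Λ) {z a₁ a₂ : V} (h₁ : IsGate A Λ z a₁)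
    (h₂ : IsGate A Λ z a₂) : a₁ = a₂ := by
  classical
  obtain ⟨ha₁, w₁, hw₁⟩ := h₁
  obtain ⟨ha₂, w₂, hw₂⟩ := h₂
  by_contra hne
  set w := w₁.reverse.append w₂
  have hw : ∀ x ∈ w.support, x ∈ Λ → x = a₁ ∨ x = a₂ := by
    intro x hx hxΛ
    rw [Walk.mem_support_append_iff, Walk.support_reverse, List.mem_reverse] at hx
    exact hx.imp (hw₁ x · hxΛ) (hw₂ x · hxΛ)
  have hp : ∀ x ∈ w.bypass.support, x = a₁ ∨ x = a₂ := fun x hx =>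
    hw x (w.support_bypass_subset_support hx)
      (hΛ.mem_of_mem_support_of_isPath ha₁ ha₂ w.bypass_isPath hx)
  have hnil : ¬w.bypass.Nil := Walk.not_nil_of_ne hne
  have hsnd : w.bypass.snd = a₂ :=
    (hp _ (w.bypass.getVert_mem_support 1)).resolve_left
      ((fromRel_adj _ _ _).mp (w.bypass.adj_snd hnil)).1.symm
  have hedge : s(a₁, a₂) ∈ w.edges := by
    have h := w.bypass.mk_start_snd_mem_edges hnil
    rw [hsnd] at h
    exact w.edges_bypass_subset_edges h
  rw [Walk.edges_append, List.mem_append, Walk.edges_reverse, List.mem_reverse] at hedge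
  rcases hedge with he | he
  · exact hne (hw₁ a₂ (w₁.snd_mem_support_of_mem_edges he) ha₂).symm
  · exact hne (hw₂ a₁ (w₂.fst_mem_support_of_mem_edges he) ha₁)

/-- The common gate is the vertex shared by `L` and `Λ` if there is one, and otherwise the gate of
any vertex of `L`, reached through `L`. -/
theorem IsLobe.isGate_eq_of_mem_lobe (hΛ : IsLobe A Λ) {L : Set V} (hL : IsLobe A L)
    (hLΛ : L ≠ Λ) {x y a b : V} (hx : x ∈ L) (hy : y ∈ L) (ha : IsGate A Λ x a)
    (hb : IsGate A Λ y b) : a = b := by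
  have hsingle : ∀ p ∈ L, p ∈ Λ → ∀ q ∈ L, q ∈ Λ → p = q := fun p hpL hpΛ q hqL hqΛ =>
    not_not.mp fun hpq => hLΛ (hL.eq_of_mem_of_mem hΛ hpL hpΛ hqL hqΛ hpq)
  by_cases hcap : ∃ c ∈ L, c ∈ Λ
  · obtain ⟨c, hcL, hcΛ⟩ := hcap
    have hgate : ∀ t ∈ L, IsGate A Λ t c := fun t ht => by
      obtain ⟨w, hw⟩ := exists_walk_of_reflTransGen ht (hL.1.2.1 t ht c hcL)
      exact ⟨hcΛ, w, fun s hs hsΛ => hsingle s (hw s hs) hsΛ c hcL hcΛ⟩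
    exact (hΛ.isGate_unique ha (hgate x hx)).trans (hΛ.isGate_unique (hgate y hy) hb)
  · push Not at hcap
    obtain ⟨hbΛ, wb, hwb⟩ := hb
    obtain ⟨w, hw⟩ := exists_walk_of_reflTransGen hx (hL.1.2.1 x hx y hy)
    refine hΛ.isGate_unique ha ⟨hbΛ, w.append wb, fun s hs hsΛ => ?_⟩
    rw [Walk.mem_support_append_iff] at hs
    exact hs.elim (fun hs => absurd hsΛ (hcap s (hw s hs))) (hwb s · hsΛ)

end Gates

section Action

variable {V G : Type*} [Group G] [MulAction G V] {A : V → V → Prop}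

theorem ConnOn.smul (hA : ∀ (g : G) (u v : V), A u v ↔ A (g • u) (g • v)) (g : G) {S : Set V}
    (hS : ConnOn A S) : ConnOn A (g • S) := by
  rintro _ ⟨u, hu, rfl⟩ _ ⟨v, hv, rfl⟩
  refine ReflTransGen.lift (g • ·) (fun a b ⟨hab, ha, hb⟩ => ?_) _ _ (hS u hu v hv)
  exact ⟨hab.imp (hA g a b).mp (hA g b a).mp, Set.smul_mem_smul_set ha, Set.smul_mem_smul_set hb⟩

theorem TwoConnOn.smul (hA : ∀ (g : G) (u v : V), A u v ↔ A (g • u) (g • v)) (g : G)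
    {S : Set V} (hS : TwoConnOn A S) : TwoConnOn A (g • S) := by
  refine ⟨hS.1.image (MulAction.injective g), hS.2.1.smul hA g, ?_⟩
  rintro _ ⟨w, hw, rfl⟩
  rw [← Set.smul_set_singleton, ← Set.smul_set_sdiff]
  exact (hS.2.2 w hw).smul hA g

theorem IsLobe.smul (hA : ∀ (g : G) (u v : V), A u v ↔ A (g • u) (g • v)) (g : G) {Λ : Set V}
    (hΛ : IsLobe A Λ) : IsLobe A (g • Λ) := by
  refine ⟨hΛ.1.smul hA g, fun T hT hsub => ?_⟩
  have h : g⁻¹ • T = Λ :=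
    hΛ.2 _ (hT.smul hA g⁻¹) (Set.smul_set_subset_iff_subset_inv_smul_set.mp hsub)
  rw [← h, smul_inv_smul]

theorem IsLobe.mem_stabilizer (hA : ∀ (g : G) (u v : V), A u v ↔ A (g • u) (g • v))
    {Λ : Set V} (hΛ : IsLobe A Λ) {g : G} {p q : V} (hp : p ∈ Λ) (hq : q ∈ Λ)
    (hpg : p ∈ g • Λ) (hqg : q ∈ g • Λ) (hpq : p ≠ q) : g ∈ MulAction.stabilizer G Λ :=
  (hΛ.smul hA g).eq_of_mem_of_mem hΛ hpg hp hqg hq hpq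

end Action

section Relations

variable {V : Type*}

theorem IsEquivRelOn.exists_ne_of_forall_or {S : Set V} {r : V → V → Prop}
    (hr : IsEquivRelOn S r) {x y : V} (hx : x ∈ S) (hy : y ∈ S) (h : ∀ u ∈ S, r u x ∨ r u y)
    (hthree : ∃ a b c : V, a ∈ S ∧ b ∈ S ∧ c ∈ S ∧ a ≠ b ∧ a ≠ c ∧ b ≠ c) :
    ∃ u ∈ S, ∃ v ∈ S, u ≠ v ∧ r u v := by
  obtain ⟨a, b, c, ha, hb, hc, hab, hac, hbc⟩ := hthree
  have join : ∀ {u v t}, u ∈ S → v ∈ S → t ∈ S → r u t → r v t → r u v :=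
    fun hu hv ht hut hvt => hr.2.2 _ hu _ ht _ hv hut (hr.2.1 _ hv _ ht hvt)
  rcases h a ha with hax | hay <;> rcases h b hb with hbx | hby
  · exact ⟨a, ha, b, hb, hab, join ha hb hx hax hbx⟩
  · rcases h c hc with hcx | hcy
    · exact ⟨a, ha, c, hc, hac, join ha hc hx hax hcx⟩
    · exact ⟨b, hb, c, hc, hbc, join hb hc hy hby hcy⟩
  · rcases h c hc with hcx | hcy
    · exact ⟨b, hb, c, hc, hbc, join hb hc hx hbx hcx⟩
    · exact ⟨a, ha, c, hc, hac, join ha hc hy hay hcy⟩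
  · exact ⟨a, ha, b, hb, hab, join ha hb hy hay hby⟩

theorem IsEquivRelOn.of_eqvGen {S : Set V} {r r' : V → V → Prop} (hr : IsEquivRelOn S r)
    {π : V → V} (hπ : ∀ z, π z ∈ S) (h : ∀ x y, r' x y → r (π x) (π y)) {x y : V}
    (hxy : EqvGen r' x y) : r (π x) (π y) := by
  induction hxy with
  | rel x y hxy => exact h x y hxy
  | refl x => exact hr.1 _ (hπ x)
  | symm x y _ ih => exact hr.2.1 _ (hπ x) _ (hπ y) ih
  | trans x y z _ _ ihxy ihyz => exact hr.2.2 _ (hπ x) _ (hπ y) _ (hπ z) ihxy ihyz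

variable {G : Type*} [Group G] [MulAction G V]

theorem eqvGen_of_primitiveOn (hprim : PrimitiveOn (⊤ : Subgroup G) (Set.univ : Set V))
    {r : V → V → Prop} (hr : ∀ (g : G) (x y : V), r x y → r (g • x) (g • y)) {u v : V}
    (huv : u ≠ v) (h : r u v) (x y : V) : EqvGen r x y := by
  have hinv : ∀ g : G, ∀ x y, EqvGen r x y → EqvGen r (g • x) (g • y) := by
    intro g x y hxy
    induction hxy with
    | rel x y hxy => exact .rel _ _ (hr g x y hxy)
    | refl x => exact .refl _
    | symm x y _ ih => exact .symm _ _ ih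
    | trans x y z _ _ ihxy ihyz => exact .trans _ _ _ ihxy ihyz
  have hequiv : IsEquivRelOn Set.univ (EqvGen r) :=
    ⟨fun _ _ => .refl _, fun _ _ _ _ => .symm _ _, fun _ _ _ _ _ _ => .trans _ _ _⟩
  rcases hprim.2 _ hequiv fun g _ x _ y _ => hinv g x y with htriv | huniv
  · exact absurd (htriv u trivial v trivial (.rel _ _ h)) huv
  · exact huniv x trivial y trivial

def SameOrbit (H : Subgroup G) (u v : V) : Prop :=
  ∃ h ∈ H, h • u = v

theorem isEquivRelOn_sameOrbit (H : Subgroup G) (S : Set V) : IsEquivRelOn S (SameOrbit H) := by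
  refine ⟨fun u _ => ⟨1, H.one_mem, one_smul G u⟩, ?_, ?_⟩
  · rintro u _ _ _ ⟨h, hh, rfl⟩
    exact ⟨h⁻¹, H.inv_mem hh, inv_smul_smul h u⟩
  · rintro u _ _ _ _ _ ⟨h₁, hh₁, rfl⟩ ⟨h₂, hh₂, rfl⟩
    exact ⟨h₂ * h₁, H.mul_mem hh₂ hh₁, mul_smul h₂ h₁ u⟩

theorem sameOrbit_smul {H : Subgroup G} {k : G} (hk : k ∈ H) {u v : V} (h : SameOrbit H u v) :
    SameOrbit H (k • u) (k • v) := by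
  obtain ⟨h, hh, rfl⟩ := h
  refine ⟨k * h * k⁻¹, H.mul_mem (H.mul_mem hk hh) (H.inv_mem hk), ?_⟩
  rw [mul_smul, mul_smul, inv_smul_smul]

def TranslateRel (G : Type*) [Group G] [MulAction G V] (Λ : Set V) (r : V → V → Prop)
    (x y : V) : Prop :=
  ∃ g : G, x ∈ g • Λ ∧ y ∈ g • Λ ∧ r (g⁻¹ • x) (g⁻¹ • y)

theorem translateRel_of_mem {Λ : Set V} {r : V → V → Prop} {x y : V} (hx : x ∈ Λ) (hy : y ∈ Λ)
    (h : r x y) : TranslateRel G Λ r x y :=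
  ⟨1, by rwa [one_smul], by rwa [one_smul], by rwa [inv_one, one_smul, one_smul]⟩

theorem TranslateRel.smul {Λ : Set V} {r : V → V → Prop} {x y : V} (k : G)
    (h : TranslateRel G Λ r x y) : TranslateRel G Λ r (k • x) (k • y) := by
  obtain ⟨g, hx, hy, hr⟩ := h
  refine ⟨k * g, ?_, ?_, ?_⟩
  · rw [mul_smul]; exact Set.smul_mem_smul_set hx
  · rw [mul_smul]; exact Set.smul_mem_smul_set hy
  · rwa [mul_inv_rev, mul_smul, mul_smul, inv_smul_smul, inv_smul_smul]

end Relations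

section LobeStabiliser

variable {V G : Type*} [Group G] [MulAction G V] {A : V → V → Prop} {Λ : Set V}

theorem IsLobe.sameOrbit_or_sameOrbit (hA : ∀ (g : G) (u v : V), A u v ↔ A (g • u) (g • v))
    (harctrans : ∀ u v u' v' : V, A u v → A u' v' → ∃ g : G, g • u = u' ∧ g • v = v')
    (hΛ : IsLobe A Λ) {x y : V} (hx : x ∈ Λ) (hy : y ∈ Λ) (hxy : x ≠ y) (hAxy : A x y) :
    ∀ u ∈ Λ, SameOrbit (MulAction.stabilizer G Λ) u x ∨
      SameOrbit (MulAction.stabilizer G Λ) u y := by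
  intro u hu
  obtain ⟨v, hv, -, hAuv | hAvu⟩ := ConnOn.exists_adj hΛ.1.2.1 hΛ.1.1 hu
  · obtain ⟨g, rfl, rfl⟩ := harctrans u v x y hAuv hAxy
    exact .inl ⟨g, hΛ.mem_stabilizer hA hx hy (Set.smul_mem_smul_set hu)
      (Set.smul_mem_smul_set hv) hxy, rfl⟩
  · obtain ⟨g, rfl, rfl⟩ := harctrans v u x y hAvu hAxy
    exact .inr ⟨g, hΛ.mem_stabilizer hA hx hy (Set.smul_mem_smul_set hv)
      (Set.smul_mem_smul_set hu) hxy, rfl⟩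

/-- A translate of `Λ` other than `Λ` is another lobe, so all its vertices have one gate. -/
theorem IsLobe.rel_gate_of_translateRel (hA : ∀ (g : G) (u v : V), A u v ↔ A (g • u) (g • v))
    (hΛ : IsLobe A Λ) {r : V → V → Prop} (hr : IsEquivRelOn Λ r)
    (hinv : ∀ h ∈ MulAction.stabilizer G Λ, ∀ u ∈ Λ, ∀ v ∈ Λ, r u v → r (h • u) (h • v))
    {π : V → V} (hπ : ∀ z, IsGate A Λ z (π z)) {x y : V} (hxy : TranslateRel G Λ r x y) :
    r (π x) (π y) := by
  obtain ⟨g, hx, hy, hrg⟩ := hxy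
  by_cases hg : g • Λ = Λ
  · rw [hg] at hx hy
    rw [hΛ.isGate_unique (hπ x) (isGate_self hx), hΛ.isGate_unique (hπ y) (isGate_self hy)]
    have h := hinv g hg _ (Set.mem_smul_set_iff_inv_smul_mem.mp (hg.symm ▸ hx)) _
      (Set.mem_smul_set_iff_inv_smul_mem.mp (hg.symm ▸ hy)) hrg
    rwa [smul_inv_smul, smul_inv_smul] at h
  · rw [hΛ.isGate_eq_of_mem_lobe (hΛ.smul hA g) hg hx hy (hπ x) (hπ y)]
    exact hr.1 _ (hπ y).1

theorem IsLobe.forall_rel_of_stabilizer_invariant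
    (hA : ∀ (g : G) (u v : V), A u v ↔ A (g • u) (g • v))
    (hvprim : PrimitiveOn (⊤ : Subgroup G) (Set.univ : Set V)) (hconn : ConnOn A Set.univ)
    (hΛ : IsLobe A Λ) {r : V → V → Prop} (hr : IsEquivRelOn Λ r)
    (hinv : ∀ h ∈ MulAction.stabilizer G Λ, ∀ u ∈ Λ, ∀ v ∈ Λ, r u v → r (h • u) (h • v))
    {u v : V} (hu : u ∈ Λ) (hv : v ∈ Λ) (huv : u ≠ v) (hruv : r u v) :
    ∀ x ∈ Λ, ∀ y ∈ Λ, r x y := by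
  choose π hπ using exists_isGate hconn hΛ.1.1.nonempty
  intro x hx y hy
  have hgen : EqvGen (TranslateRel G Λ r) x y :=
    eqvGen_of_primitiveOn hvprim (fun k _ _ => TranslateRel.smul k) huv
      (translateRel_of_mem hu hv hruv) x y
  have h := hr.of_eqvGen (fun z => (hπ z).1)
    (fun _ _ => hΛ.rel_gate_of_translateRel hA hr hinv hπ) hgen
  rwa [hΛ.isGate_unique (hπ x) (isGate_self hx), hΛ.isGate_unique (hπ y) (isGate_self hy)] at h

end LobeStabiliser

/-- Let `G` act vertex-primitively and arc-transitively on a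
connectivity-one digraph `Γ` (with arc relation `A`), and let `Λ` be a lobe of `Γ`
with at least three vertices. Then the setwise stabiliser of `Λ` (whose induced
permutations form the group of automorphisms of `Λ` induced by it) acts primitively
on the vertex set of `Λ`. -/
theorem lobe_stabiliser_primitive
    {V : Type*} {G : Type*} [Group G] [MulAction G V]
    (A : V → V → Prop)
    (hA : ∀ (g : G) (u v : V), A u v ↔ A (g • u) (g • v))
    (hvprim : PrimitiveOn (⊤ : Subgroup G) (Set.univ : Set V))
    (harctrans : ∀ u v u' v' : V, A u v → A u' v' → ∃ g : G, g • u = u' ∧ g • v = v')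
    (hconn1 : ConnectivityOne A)
    (Λ : Set V) (hΛ : IsLobe A Λ)
    (hthree : ∃ a b c : V, a ∈ Λ ∧ b ∈ Λ ∧ c ∈ Λ ∧ a ≠ b ∧ a ≠ c ∧ b ≠ c) :
    PrimitiveOn (MulAction.stabilizer G Λ) Λ := by
  refine ⟨?_, fun r hr hinv => ?_⟩
  · obtain ⟨x, hx, y, hy, hxy, hAxy⟩ := hΛ.1.exists_arc
    have horbit := isEquivRelOn_sameOrbit (MulAction.stabilizer G Λ) Λ
    obtain ⟨u, hu, v, hv, huv, hsame⟩ := horbit.exists_ne_of_forall_or hx hy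
      (hΛ.sameOrbit_or_sameOrbit hA harctrans hx hy hxy hAxy) hthree
    exact hΛ.forall_rel_of_stabilizer_invariant hA hvprim hconn1.1 horbit
      (fun _ hk _ _ _ _ => sameOrbit_smul hk) hu hv huv hsame
  · by_cases htriv : ∀ u ∈ Λ, ∀ v ∈ Λ, r u v → u = v
    · exact .inl htriv
    · push Not at htriv
      obtain ⟨u, hu, v, hv, hruv, huv⟩ := htriv
      exact .inr (hΛ.forall_rel_of_stabilizer_invariant hA hvprim hconn1.1 hr hinv hu hv huv hruv)
end

section
/- Let T be a tree, let H be a group of automorphisms of T, let Λ be a finite nonempty set of vertices of T all moved within Λ by H (i.e., H leaves Λ invariant), and suppose H fixes an end ε of T. Then H fixes some vertex of T. Specifically, any vertex x of T such that the component of T \ {x} containing ε contains no element of Λ is fixed by H. -/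
section Rays

variable {V : Type*}

/-- A ray (half-line) in a graph: a one-way infinite cycle-free path. -/
def IsRay (T : SimpleGraph V) (f : ℕ → V) : Prop :=
  Function.Injective f ∧ ∀ n : ℕ, T.Adj (f n) (f (n + 1))

/-- `v` is reachable from `u` by a path avoiding the set `F`. -/
def ReachAvoiding (T : SimpleGraph V) (F : Set V) (u v : V) : Prop :=
  Relation.ReflTransGen (fun x y => T.Adj x y ∧ x ∉ F ∧ y ∉ F) u v

/-- Two rays are equivalent (belong to the same end) if for every finite set of
vertices the rays have points connected by a path avoiding it. -/
def RaysEquivalent (T : SimpleGraph V) (f g : ℕ → V) : Prop :=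
  ∀ F : Finset V, ∃ m n : ℕ, f m ∉ (F : Set V) ∧ g n ∉ (F : Set V) ∧
    ReachAvoiding T (F : Set V) (f m) (g n)

end Rays

/-!
Say that `x` separates `l` from the end `ε` if every path from `l` far enough into `ε` passes
through `x`. Since `H` fixes `ε`, this relation is `H`-equivariant, so `y = h • x` separates every
`l ∈ Λ` from `ε` as well. Far along a ray in `ε` this gives
`d(l, f n) = d(l, x) + d(x, f n) = d(l, y) + d(y, f n)` for all `l ∈ Λ`. The potential
`∑ l ∈ Λ, d(l, ·)` is `H`-invariant because `H` permutes `Λ`, so summing over `Λ` yields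
`d(x, f n) = d(y, f n)` and then `d(l, x) = d(l, y)`. If `x ≠ y`, a geodesic from `l` to `x`
followed by one from `x` to `f n` would then avoid `y`, contradicting that `y` separates `l`
from `ε`.
-/

open Filter Finset

section Separation

variable {V V' : Type*} {G : SimpleGraph V} {G' : SimpleGraph V'} {u v w : V}

namespace SimpleGraph

lemma Hom.dist_map_le (φ : G →g G') (h : G.Reachable u v) :
    G'.dist (φ u) (φ v) ≤ G.dist u v := by
  obtain ⟨p, hp⟩ := h.exists_walk_length_eq_dist
  simpa [hp] using dist_le (p.map φ)

lemma Iso.dist_eq (φ : G ≃g G') : G'.dist (φ u) (φ v) = G.dist u v := by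
  by_cases h : G.Reachable u v
  · refine le_antisymm (φ.toHom.dist_map_le h) ?_
    simpa using φ.symm.toHom.dist_map_le (u := φ u) (v := φ v) (Iso.reachable_iff.mpr h)
  · rw [dist_eq_zero_of_not_reachable h,
      dist_eq_zero_of_not_reachable (mt Iso.reachable_iff.mp h)]

end SimpleGraph

lemma ReachAvoiding.mono {F F' : Set V} (hF : F ⊆ F') (h : ReachAvoiding G F' u v) :
    ReachAvoiding G F u v :=
  Relation.ReflTransGen.mono
    (fun _ _ hab => ⟨hab.1, fun ha => hab.2.1 (hF ha), fun hb => hab.2.2 (hF hb)⟩) _ _ h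

lemma ReachAvoiding.symm {F : Set V} (h : ReachAvoiding G F u v) : ReachAvoiding G F v u := by
  induction h with
  | refl => exact .refl
  | tail _ hab ih => exact .head ⟨hab.1.symm, hab.2.2, hab.2.1⟩ ih

lemma ReachAvoiding.map (φ : G ↪g G') (h : ReachAvoiding G {w} u v) :
    ReachAvoiding G' {φ w} (φ u) (φ v) :=
  h.lift φ fun _ _ hab =>
    ⟨φ.map_adj_iff.2 hab.1, fun ha => hab.2.1 (φ.injective ha),
      fun hb => hab.2.2 (φ.injective hb)⟩

lemma reachAvoiding_of_notMem_support (p : G.Walk u v) (hw : w ∉ p.support) :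
    ReachAvoiding G {w} u v := by
  induction p with
  | nil => exact .refl
  | cons hadj q ih =>
    rw [SimpleGraph.Walk.support_cons, List.mem_cons, not_or] at hw
    exact .head ⟨hadj, Ne.symm hw.1, fun h => hw.2 (h ▸ q.start_mem_support)⟩ (ih hw.2)

lemma SimpleGraph.Connected.dist_eq_add_of_not_reachAvoiding (hc : G.Connected)
    (h : ¬ ReachAvoiding G {v} u w) : G.dist u w = G.dist u v + G.dist v w := by
  classical
  obtain ⟨p, hp⟩ := hc.exists_walk_length_eq_dist u w
  have hv : v ∈ p.support := by_contra fun hv => h (reachAvoiding_of_notMem_support p hv)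
  have hlen := congrArg SimpleGraph.Walk.length (p.take_spec hv)
  rw [SimpleGraph.Walk.length_append] at hlen
  have := SimpleGraph.dist_le (p.takeUntil v hv)
  have := SimpleGraph.dist_le (p.dropUntil v hv)
  have := hc.dist_triangle (u := u) (v := v) (w := w)
  omega

lemma SimpleGraph.Connected.reachAvoiding_of_dist_lt (hc : G.Connected)
    (h : G.dist u w < G.dist u v + G.dist v w) : ReachAvoiding G {v} u w := by
  by_contra hr
  exact h.ne (hc.dist_eq_add_of_not_reachAvoiding hr)

lemma IsRay.exists_reachAvoiding_tail {f : ℕ → V} (hf : IsRay G f) (w : V) :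
    ∃ N, ∀ n ≥ N, ReachAvoiding G {w} (f N) (f n) := by
  have hne : ∀ᶠ n in atTop, f n ≠ w :=
    Nat.cofinite_eq_atTop ▸ hf.1.tendsto_cofinite.eventually (eventually_cofinite_ne w)
  obtain ⟨N, hN⟩ := eventually_atTop.1 hne
  refine ⟨N, fun n hn => ?_⟩
  induction n, hn using Nat.le_induction with
  | base => exact .refl
  | succ n hn ih => exact ih.tail ⟨hf.2 n, hN n hn, hN (n + 1) (by omega)⟩

/-- `u` lies outside the component of `G \ {w}` containing the end of the ray `f`. -/
def SeparatesFromEnd (G : SimpleGraph V) (f : ℕ → V) (w u : V) : Prop :=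
  ∀ᶠ n in atTop, ¬ ReachAvoiding G {w} u (f n)

lemma SeparatesFromEnd.map {f : ℕ → V} (φ : G ≃g G') (h : SeparatesFromEnd G f w u) :
    SeparatesFromEnd G' (φ ∘ f) (φ w) (φ u) :=
  h.mono fun _ hn hr => hn (by simpa using hr.map φ.symm.toEmbedding)

lemma SeparatesFromEnd.of_raysEquivalent {f g : ℕ → V} (hgf : RaysEquivalent G g f)
    (hf : IsRay G f) (h : SeparatesFromEnd G g w u) : SeparatesFromEnd G f w u := by
  classical
  obtain ⟨M, hM⟩ := eventually_atTop.1 h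
  obtain ⟨N, hN⟩ := hf.exists_reachAvoiding_tail w
  obtain ⟨m, n, hm, hn, hmn⟩ := hgf (insert w ((range M).image g ∪ (range N).image f))
  have hmM : M ≤ m := not_lt.1 fun hlt => hm <| mem_coe.2 <|
    mem_insert_of_mem <| mem_union_left _ <| mem_image_of_mem g (mem_range.2 hlt)
  have hnN : N ≤ n := not_lt.1 fun hlt => hn <| mem_coe.2 <|
    mem_insert_of_mem <| mem_union_right _ <| mem_image_of_mem f (mem_range.2 hlt)
  have hw : ({w} : Set V) ⊆ ↑(insert w ((range M).image g ∪ (range N).image f)) := by simp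
  refine eventually_atTop.2 ⟨N, fun k hk huk => hM m hmM ?_⟩
  exact huk.trans ((hN k hk).symm.trans ((hN n hnN).trans (hmn.mono hw).symm))

lemma SeparatesFromEnd.eventually_dist_eq (hc : G.Connected) {f : ℕ → V}
    (h : SeparatesFromEnd G f w u) :
    ∀ᶠ n in atTop, G.dist u (f n) = G.dist u w + G.dist w (f n) :=
  h.mono fun _ => hc.dist_eq_add_of_not_reachAvoiding

lemma eq_of_forall_separatesFromEnd (hc : G.Connected)
    {f : ℕ → V} {Λ : Finset V} (hΛ : Λ.Nonempty) {x y : V}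
    (hx : ∀ l ∈ Λ, SeparatesFromEnd G f x l) (hy : ∀ l ∈ Λ, SeparatesFromEnd G f y l)
    (hsum : ∑ l ∈ Λ, G.dist l x = ∑ l ∈ Λ, G.dist l y) : x = y := by
  by_contra hxy
  obtain ⟨n, hn⟩ := ((eventually_all_finset Λ).2 fun l hl =>
    (hx l hl).and <| (hy l hl).and <|
      (hx l hl).eventually_dist_eq hc |>.and <| (hy l hl).eventually_dist_eq hc).exists
  have hdist : ∀ l ∈ Λ, G.dist l x + G.dist x (f n) = G.dist l y + G.dist y (f n) :=
    fun l hl => (hn l hl).2.2.1.symm.trans (hn l hl).2.2.2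
  have hxn : G.dist x (f n) = G.dist y (f n) := by
    have := sum_congr rfl hdist
    rw [sum_add_distrib, sum_add_distrib, sum_const, sum_const, hsum, smul_eq_mul,
      smul_eq_mul, Nat.add_left_cancel_iff] at this
    exact Nat.eq_of_mul_eq_mul_left (card_pos.2 hΛ) this
  obtain ⟨l, hl⟩ := hΛ
  have hlx : G.dist l x = G.dist l y := by have := hdist l hl; omega
  have hpos : 0 < G.dist x y := hc.pos_dist_of_ne hxy
  -- as `x` and `y` are equidistant from `l` and from `f n`, no geodesic through `x` meets `y`
  have hly : ReachAvoiding G {y} l x :=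
    hc.reachAvoiding_of_dist_lt (by rw [SimpleGraph.dist_comm (u := y)]; omega)
  exact (hn l hl).2.1 (hly.trans (hc.reachAvoiding_of_dist_lt (by omega)))

end Separation

section Action

variable {V H : Type*} [Group H] [MulAction H V] {T : SimpleGraph V}

def SimpleGraph.isoOfSMul (hadj : ∀ (h : H) (u v : V), T.Adj u v ↔ T.Adj (h • u) (h • v))
    (g : H) : T ≃g T :=
  ⟨MulAction.toPerm g, (hadj g _ _).symm⟩

@[simp]
lemma SimpleGraph.isoOfSMul_apply
    (hadj : ∀ (h : H) (u v : V), T.Adj u v ↔ T.Adj (h • u) (h • v)) (g : H) (v : V) :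
    isoOfSMul hadj g v = g • v :=
  rfl

lemma sum_dist_smul_eq (hadj : ∀ (h : H) (u v : V), T.Adj u v ↔ T.Adj (h • u) (h • v))
    {Λ : Finset V} (hinv : ∀ h : H, ∀ l ∈ Λ, h • l ∈ Λ) (g : H) (v : V) :
    ∑ l ∈ Λ, T.dist l (g • v) = ∑ l ∈ Λ, T.dist l v :=
  sum_nbij' (g⁻¹ • ·) (g • ·) (hinv g⁻¹) (hinv g) (fun _ _ => smul_inv_smul g _)
    (fun _ _ => inv_smul_smul g _) fun l _ => by
      simpa using (SimpleGraph.isoOfSMul hadj g).dist_eq (u := g⁻¹ • l) (v := v)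

end Action

/-- Let a group `H` act by automorphisms on a tree `T`, let `Λ` be
a finite nonempty invariant set of vertices, and suppose `H` fixes an end `ε` of `T`
(represented by the ray `f`). Then `H` fixes some vertex of `T`: specifically, any
vertex `x` such that the component of `T \ {x}` containing `ε` contains no element
of `Λ` is fixed by `H`. -/
theorem finite_invariant_set_and_fixed_end_gives_fixed_vertex
    {V : Type*} {H : Type*} [Group H] [MulAction H V]
    (T : SimpleGraph V) (hT : T.IsTree)
    (hadj : ∀ (h : H) (u v : V), T.Adj u v ↔ T.Adj (h • u) (h • v))
    (Λ : Finset V) (hne : Λ.Nonempty)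
    (hinv : ∀ (h : H), ∀ l ∈ Λ, h • l ∈ Λ)
    (f : ℕ → V) (hray : IsRay T f)
    (hend : ∀ h : H, RaysEquivalent T (fun n => h • f n) f)
    (x : V)
    (hx : ∀ l ∈ Λ, ∃ N : ℕ, ∀ n ≥ N, ¬ ReachAvoiding T {x} l (f n)) :
    ∀ h : H, h • x = x := by
  intro h
  have hsep : ∀ l ∈ Λ, SeparatesFromEnd T f x l := fun l hl => eventually_atTop.2 (hx l hl)
  have hsep_smul : ∀ l ∈ Λ, SeparatesFromEnd T f (h • x) l := fun l hl => by
    have := (hsep _ (hinv h⁻¹ l hl)).map (SimpleGraph.isoOfSMul hadj h)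
    simp only [SimpleGraph.isoOfSMul_apply, smul_inv_smul] at this
    exact this.of_raysEquivalent (hend h) hray
  exact eq_of_forall_separatesFromEnd hT.connected hne hsep_smul hsep
    (sum_dist_smul_eq hadj hinv h x)
end
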